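/- Let K ⊆ V be a nonempty cone and 𝒻 ⊆ F̂(K) a family such that −∞ < ζ_p(co(⋃_{F ∈ 𝒻} F)) < +∞. Then for every F ∈ 𝒻, ζ_p(K ∩ F) = ζ_p(F) (where both sides equal +∞ when COP(K ∩ F) is infeasible). -/

import Mathlib

/-!
Bounded below on the slice `⟨H, ·⟩ = 1`, the convex cone `F` admits no direction of unbounded
descent: for feasible `X` and `Y ∈ F` with `⟨H, Y⟩ ≤ 0`, the ray `X + s (Y - ⟨H, Y⟩ X)` stays
feasible, which forces `⟨Q, Y⟩ ≥ ⟨H, Y⟩ ⟨Q, X⟩`. Writing a feasible `X` as a sum of points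
`yᵢ ∈ K ∩ F`, the numbers `⟨Q, yᵢ⟩ - ⟨Q, X⟩ ⟨H, yᵢ⟩` sum to zero and are nonnegative whenever
`⟨H, yᵢ⟩ ≤ 0`, so one of them is `≤ 0` at an index with `⟨H, yᵢ⟩ > 0`. Rescaling that `yᵢ` gives a
feasible point of `K ∩ F` that is no worse than `X`.
-/

open RealInnerProductSpace

variable {V : Type*} [NormedAddCommGroup V] [InnerProductSpace ℝ V]

/-- A (not necessarily convex or closed) cone: closed under nonnegative scaling. -/
def IsCone (C : Set V) : Prop := ∀ X ∈ C, ∀ l : ℝ, 0 ≤ l → l • X ∈ C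

/-- The optimal value `ζ_p(C) = inf {⟨Q, X⟩ : X ∈ C, ⟨H, X⟩ = 1}` in `[-∞, +∞]`;
it equals `+∞` when the feasible set is empty. -/
noncomputable def zetaP (Q H : V) (C : Set V) : EReal :=
  sInf ((fun X => ((⟪Q, X⟫ : ℝ) : EReal)) '' {X | X ∈ C ∧ ⟪H, X⟫ = 1})

/-- `F̂(K)`: the family of all convex cones `J ⊆ co K` with `co (K ∩ J) = J`. -/
def Fhat (K : Set V) : Set (Set V) :=
  {J | Convex ℝ J ∧ IsCone J ∧ J ⊆ convexHull ℝ K ∧ convexHull ℝ (K ∩ J) = J}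

lemma Real.nonneg_of_forall_le_add_mul {r a b : ℝ} (h : ∀ s : ℝ, 0 ≤ s → r ≤ a + s * b) :
    0 ≤ b := by
  by_contra! hb
  have hs : 0 ≤ (a - r + 1) / -b := div_nonneg (by linarith [h 0 le_rfl]) (by linarith)
  have key := h _ hs
  rw [div_mul_eq_mul_div, div_neg, mul_div_assoc, div_self hb.ne] at key
  linarith

lemma Finset.exists_pos_and_nonpos_of_sum {ι : Type*} (s : Finset ι) (f h : ι → ℝ)
    (hf : ∑ i ∈ s, f i = 0) (hh : 0 < ∑ i ∈ s, h i) (hfh : ∀ i ∈ s, h i ≤ 0 → 0 ≤ f i) :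
    ∃ i ∈ s, 0 < h i ∧ f i ≤ 0 := by
  by_contra! hpos
  obtain ⟨i, hi, hhi⟩ := Finset.exists_lt_of_sum_lt (by simpa using hh : ∑ i ∈ s, (0 : ℝ) < _)
  have : 0 < ∑ i ∈ s, f i := Finset.sum_pos' (fun j hj => (le_or_gt (h j) 0).elim
    (hfh j hj) fun hj' => (hpos j hj hj').le) ⟨i, hi, hpos i hi hhi⟩
  linarith

namespace IsCone

variable {C D : Set V}

lemma inter (hC : IsCone C) (hD : IsCone D) : IsCone (C ∩ D) :=
  fun X hX l hl => ⟨hC X hX.1 l hl, hD X hX.2 l hl⟩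

lemma add_mem (hC : IsCone C) (hconv : Convex ℝ C) {X Y : V} (hX : X ∈ C) (hY : Y ∈ C) :
    X + Y ∈ C := by
  have hmid := hC _ (hconv hX hY (by norm_num : (0 : ℝ) ≤ 1 / 2) (by norm_num : (0 : ℝ) ≤ 1 / 2)
    (by norm_num)) 2 (by norm_num)
  rwa [smul_add, smul_smul, smul_smul, show (2 : ℝ) * (1 / 2) = 1 by norm_num, one_smul,
    one_smul] at hmid

lemma exists_sum_eq_of_mem_convexHull (hC : IsCone C) {X : V} (hX : X ∈ convexHull ℝ C) :
    ∃ (ι : Type) (_ : Fintype ι) (y : ι → V), (∀ i, y i ∈ C) ∧ ∑ i, y i = X := by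
  obtain ⟨ι, _, w, z, hw, -, hz, rfl⟩ := mem_convexHull_iff_exists_fintype.1 hX
  exact ⟨ι, inferInstance, fun i => w i • z i, fun i => hC _ (hz i) _ (hw i), rfl⟩

end IsCone

section Slice

variable {Q H : V} {F : Set V} {r : ℝ}

lemma le_zetaP_iff {C : Set V} {a : EReal} :
    a ≤ zetaP Q H C ↔ ∀ X ∈ C, ⟪H, X⟫ = 1 → a ≤ (⟪Q, X⟫ : ℝ) := by
  simp only [zetaP, le_sInf_iff, Set.forall_mem_image, Set.mem_ofPred_eq, and_imp]

lemma zetaP_le {C : Set V} {X : V} (hX : X ∈ C) (hXH : ⟪H, X⟫ = 1) :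
    zetaP Q H C ≤ (⟪Q, X⟫ : ℝ) :=
  sInf_le (Set.mem_image_of_mem _ ⟨hX, hXH⟩)

lemma zetaP_anti {C D : Set V} (h : C ⊆ D) : zetaP Q H D ≤ zetaP Q H C :=
  sInf_le_sInf (Set.image_mono fun _ hX => ⟨h hX.1, hX.2⟩)

lemma mul_inner_le_inner_of_forall_le (hFconv : Convex ℝ F) (hFcone : IsCone F)
    (hr : ∀ X ∈ F, ⟪H, X⟫ = 1 → r ≤ ⟪Q, X⟫) {X Y : V} (hX : X ∈ F) (hXH : ⟪H, X⟫ = 1)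
    (hY : Y ∈ F) (hYH : ⟪H, Y⟫ ≤ 0) :
    ⟪H, Y⟫ * ⟪Q, X⟫ ≤ ⟪Q, Y⟫ := by
  set d := Y + (-⟪H, Y⟫) • X
  have hd : d ∈ F := hFcone.add_mem hFconv hY (hFcone X hX _ (neg_nonneg.2 hYH))
  have hdH : ⟪H, d⟫ = 0 := by simp [d, inner_add_right, real_inner_smul_right, hXH]
  have hray : ∀ s : ℝ, 0 ≤ s → r ≤ ⟪Q, X⟫ + s * ⟪Q, d⟫ := fun s hs => by
    simpa [inner_add_right, real_inner_smul_right, hXH, hdH] using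
      hr _ (hFcone.add_mem hFconv hX (hFcone d hd s hs))
  have hdQ : ⟪Q, d⟫ = ⟪Q, Y⟫ - ⟪H, Y⟫ * ⟪Q, X⟫ := by
    simp only [d, inner_add_right, real_inner_smul_right]
    ring
  linarith [Real.nonneg_of_forall_le_add_mul hray]

lemma exists_mem_inner_le_of_mem_convexHull (hFconv : Convex ℝ F) (hFcone : IsCone F)
    (hr : ∀ X ∈ F, ⟪H, X⟫ = 1 → r ≤ ⟪Q, X⟫) {S : Set V} (hS : IsCone S) (hSF : S ⊆ F)
    {X : V} (hXS : X ∈ convexHull ℝ S) (hXH : ⟪H, X⟫ = 1) :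
    ∃ Y ∈ S, ⟪H, Y⟫ = 1 ∧ ⟪Q, Y⟫ ≤ ⟪Q, X⟫ := by
  have hX : X ∈ F := convexHull_min hSF hFconv hXS
  obtain ⟨ι, _, y, hyS, hyX⟩ := hS.exists_sum_eq_of_mem_convexHull hXS
  have hsumH : ∑ i, ⟪H, y i⟫ = 1 := by rw [← inner_sum, hyX, hXH]
  have hsumQ : ∑ i, (⟪Q, y i⟫ - ⟪Q, X⟫ * ⟪H, y i⟫) = 0 := by
    rw [Finset.sum_sub_distrib, ← Finset.mul_sum, hsumH, ← inner_sum, hyX, mul_one, sub_self]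
  obtain ⟨i, -, hHi, hQi⟩ := Finset.exists_pos_and_nonpos_of_sum Finset.univ _ _ hsumQ
    (by rw [hsumH]; exact one_pos) fun i _ hHi => by
      linarith [mul_inner_le_inner_of_forall_le hFconv hFcone hr hX hXH (hSF (hyS i)) hHi]
  refine ⟨(⟪H, y i⟫)⁻¹ • y i, hS _ (hyS i) _ (inv_nonneg.2 hHi.le), ?_, ?_⟩
  · rw [real_inner_smul_right, inv_mul_cancel₀ hHi.ne']
  · rw [real_inner_smul_right, inv_mul_le_iff₀ hHi]
    linarith

end Slice

theorem stmt_13_general (Q H : V) (K : Set V) (hKcone : IsCone K)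
    (𝓕 : Set (Set V)) (h𝓕 : 𝓕 ⊆ Fhat K)
    (hfin : ⊥ < zetaP Q H (convexHull ℝ (⋃₀ 𝓕)) ∧ zetaP Q H (convexHull ℝ (⋃₀ 𝓕)) < ⊤) :
    ∀ F ∈ 𝓕, zetaP Q H (K ∩ F) = zetaP Q H F := by
  intro F hF
  obtain ⟨hFconv, hFcone, -, hFhull⟩ := h𝓕 hF
  obtain ⟨r, -, hr⟩ := EReal.lt_iff_exists_real_btwn.1 hfin.1
  have hrF : ∀ X ∈ F, ⟪H, X⟫ = 1 → r ≤ ⟪Q, X⟫ := fun X hX hXH => by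
    have hle := hr.le.trans (zetaP_anti (Q := Q) (H := H)
      ((Set.subset_sUnion_of_mem hF).trans (subset_convexHull ℝ _)))
    exact_mod_cast le_zetaP_iff.1 hle X hX hXH
  refine le_antisymm (le_zetaP_iff.2 fun X hX hXH => ?_) (zetaP_anti Set.inter_subset_right)
  obtain ⟨Y, hY, hYH, hYQ⟩ := exists_mem_inner_le_of_mem_convexHull hFconv hFcone hrF
    (hKcone.inter hFcone) Set.inter_subset_right (hFhull.symm ▸ hX) hXH
  exact (zetaP_le hY hYH).trans (EReal.coe_le_coe_iff.2 hYQ)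

/-- Theorem 3.3 (ii): for a family `𝓕 ⊆ F̂(K)` with `-∞ < ζ_p(co (⋃ 𝓕)) < ∞`,
`ζ_p(K ∩ F) = ζ_p(F)` for every `F ∈ 𝓕`. -/
theorem stmt_13 [FiniteDimensional ℝ V] (Q H : V) (hH : H ≠ 0) (K : Set V)
    (hKne : K.Nonempty) (hKcone : IsCone K)
    (𝓕 : Set (Set V)) (h𝓕 : 𝓕 ⊆ Fhat K)
    (hfin : ⊥ < zetaP Q H (convexHull ℝ (⋃₀ 𝓕)) ∧ zetaP Q H (convexHull ℝ (⋃₀ 𝓕)) < ⊤) :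
    ∀ F ∈ 𝓕, zetaP Q H (K ∩ F) = zetaP Q H F :=
  stmt_13_general Q H K hKcone 𝓕 h𝓕 hfin
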